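/- Let β = √β_2 be the square root of the golden mean and α = 2 - β_2 = 2 - β². Then with p = (1-α)/β, the upper kneading invariant τ⁺_{β,α}(p) equals the periodic sequence (1,0,0,1,1,0,0,1,...) with period 4, while the lower kneading invariant τ⁻_{β,α}(p) equals (0,1,1,0,1,0,1,0,...), i.e., (0,1) followed by the periodic word (1,0); in particular τ⁺_{β,α}(p) is periodic but τ⁻_{β,α}(p) is pre-periodic and not periodic. -/

import Mathlib

noncomputable def Tplus (β α : ℝ) (x : ℝ) : ℝ :=
  if x < (1 - α) / β then β * x + α else β * x + α - 1

noncomputable def Tminus (β α : ℝ) (x : ℝ) : ℝ :=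
  if x ≤ (1 - α) / β then β * x + α else β * x + α - 1

noncomputable def tauPlus (β α : ℝ) : ℕ → Fin 2 := fun n =>
  if (Tplus β α)^[n] ((1 - α) / β) < (1 - α) / β then 0 else 1

noncomputable def tauMinus (β α : ℝ) : ℕ → Fin 2 := fun n =>
  if (Tminus β α)^[n] ((1 - α) / β) ≤ (1 - α) / β then 0 else 1

def IsPeriodic (ω : ℕ → Fin 2) : Prop := ∃ k : ℕ, 0 < k ∧ ∀ n, ω (n + k) = ω n

/-!
With `β = √φ` and `α = 2 - φ`, the `T⁺`-orbit of the turning point `p` is the 4-cycle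
`p ↦ 0 ↦ α ↦ βα + α ↦ p`, whereas the `T⁻`-orbit is `p ↦ 1 ↦ q ↦ βq + α - 1 ↦ q` with
`q = β + α - 1`. Each step, and each comparison with `p` that produces a letter, is a polynomial
identity or inequality in `β` and `φ`, using only `β² = φ`, `φ² = φ + 1` and `1 < β < φ < 2`.
The lower invariant is not periodic because a periodic sequence that is eventually 2-periodic is
2-periodic, while `τ⁻(0) = 0 ≠ 1 = τ⁻(2)`.
-/

open Function

theorem Function.Periodic.periodic_of_tail {α : Type*} {ω : ℕ → α} {k m N : ℕ}
    (hω : Periodic ω k) (hk : 0 < k) (htail : Periodic (fun n => ω (n + N)) m) :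
    Periodic ω m := by
  obtain ⟨k, rfl⟩ : ∃ k', k = k' + 1 := ⟨k - 1, by omega⟩
  have hN : Periodic ω (N * (k + 1)) := by simpa using hω.nat_mul N
  intro n
  calc ω (n + m) = ω (n + m + N * (k + 1)) := (hN _).symm
    _ = ω (n + N * k + m + N) := by congr 1; ring
    _ = ω (n + N * k + N) := htail _
    _ = ω (n + N * (k + 1)) := by congr 1; ring
    _ = ω n := hN n

section KneadingMaps

variable {β α x : ℝ}

theorem Tplus_of_lt (h : x < (1 - α) / β) : Tplus β α x = β * x + α := if_pos h

theorem Tplus_of_ge (h : (1 - α) / β ≤ x) : Tplus β α x = β * x + α - 1 := if_neg h.not_gt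

theorem Tminus_of_le (h : x ≤ (1 - α) / β) : Tminus β α x = β * x + α := if_pos h

theorem Tminus_of_gt (h : (1 - α) / β < x) : Tminus β α x = β * x + α - 1 := if_neg h.not_ge

theorem Tplus_turningPoint (hβ : β ≠ 0) : Tplus β α ((1 - α) / β) = 0 := by
  rw [Tplus_of_ge le_rfl, mul_div_cancel₀ _ hβ]; ring

theorem Tminus_turningPoint (hβ : β ≠ 0) : Tminus β α ((1 - α) / β) = 1 := by
  rw [Tminus_of_le le_rfl, mul_div_cancel₀ _ hβ]; ring

theorem tauPlus_of_lt {n : ℕ} (h : (Tplus β α)^[n] ((1 - α) / β) < (1 - α) / β) :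
    tauPlus β α n = 0 := if_pos h

theorem tauPlus_of_ge {n : ℕ} (h : (1 - α) / β ≤ (Tplus β α)^[n] ((1 - α) / β)) :
    tauPlus β α n = 1 := if_neg h.not_gt

theorem tauMinus_of_le {n : ℕ} (h : (Tminus β α)^[n] ((1 - α) / β) ≤ (1 - α) / β) :
    tauMinus β α n = 0 := if_pos h

theorem tauMinus_of_gt {n : ℕ} (h : (1 - α) / β < (Tminus β α)^[n] ((1 - α) / β)) :
    tauMinus β α n = 1 := if_neg h.not_ge

theorem periodic_tauPlus {k : ℕ} (h : IsPeriodicPt (Tplus β α) k ((1 - α) / β)) :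
    Periodic (tauPlus β α) k := fun n => by
  simp only [tauPlus, iterate_add_apply, h.eq]

theorem periodic_tauMinus_add {j k : ℕ}
    (h : IsPeriodicPt (Tminus β α) k ((Tminus β α)^[j] ((1 - α) / β))) :
    Periodic (fun n => tauMinus β α (n + j)) k := fun n => by
  simp only [tauMinus, iterate_add_apply, h.eq]

end KneadingMaps

section GoldenMean

open Real goldenRatio

local notation "β" => √φ
local notation "α" => 2 - φ
local notation "p" => (1 - α) / β

theorem sq_sqrt_goldenRatio : β ^ 2 = φ := sq_sqrt goldenRatio_pos.le

theorem sqrt_goldenRatio_pos : 0 < β := sqrt_pos.2 goldenRatio_pos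

theorem one_lt_sqrt_goldenRatio : 1 < β := by
  rw [lt_sqrt zero_le_one, one_pow]; exact one_lt_goldenRatio

theorem sqrt_goldenRatio_lt_goldenRatio : β < φ := by
  rw [sqrt_lt' goldenRatio_pos]; nlinarith [one_lt_goldenRatio]

theorem turningPoint_golden_pos : 0 < p :=
  div_pos (by linarith [one_lt_goldenRatio]) sqrt_goldenRatio_pos

theorem turningPoint_golden_lt_one : p < 1 := by
  rw [div_lt_iff₀ sqrt_goldenRatio_pos]
  linarith [one_lt_sqrt_goldenRatio, goldenRatio_lt_two]

theorem alpha_golden_lt_turningPoint : α < p := by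
  rw [lt_div_iff₀ sqrt_goldenRatio_pos]
  nlinarith [sqrt_goldenRatio_lt_goldenRatio, goldenRatio_lt_two, goldenRatio_sq]

theorem turningPoint_golden_le_mul_add : p ≤ β * α + α := by
  rw [div_le_iff₀ sqrt_goldenRatio_pos]
  nlinarith [sqrt_goldenRatio_pos, goldenRatio_lt_two, goldenRatio_sq, sq_sqrt_goldenRatio]

theorem turningPoint_golden_lt_add_sub_one : p < β + α - 1 := by
  rw [div_lt_iff₀ sqrt_goldenRatio_pos]
  nlinarith [sqrt_goldenRatio_lt_goldenRatio, one_lt_goldenRatio, goldenRatio_sq,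
    sq_sqrt_goldenRatio]

theorem mul_add_sub_one_le_turningPoint_golden : β * (β + α - 1) + α - 1 ≤ p := by
  rw [le_div_iff₀ sqrt_goldenRatio_pos]
  nlinarith [sqrt_goldenRatio_lt_goldenRatio, sqrt_goldenRatio_pos, goldenRatio_sq,
    sq_sqrt_goldenRatio]

theorem Tplus_golden_zero : Tplus β α 0 = α := by
  rw [Tplus_of_lt turningPoint_golden_pos]; ring

theorem Tplus_golden_alpha : Tplus β α α = β * α + α :=
  Tplus_of_lt alpha_golden_lt_turningPoint

theorem Tplus_golden_mul_add : Tplus β α (β * α + α) = p := by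
  rw [Tplus_of_ge turningPoint_golden_le_mul_add, eq_div_iff sqrt_goldenRatio_pos.ne']
  linear_combination (2 - φ) * (β + 1) * sq_sqrt_goldenRatio - (β + 1) * goldenRatio_sq

theorem Tminus_golden_one : Tminus β α 1 = β + α - 1 := by
  rw [Tminus_of_gt turningPoint_golden_lt_one]; ring

theorem Tminus_golden_add_sub_one : Tminus β α (β + α - 1) = β * (β + α - 1) + α - 1 :=
  Tminus_of_gt turningPoint_golden_lt_add_sub_one

theorem Tminus_golden_mul_add_sub_one :
    Tminus β α (β * (β + α - 1) + α - 1) = β + α - 1 := by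
  rw [Tminus_of_le mul_add_sub_one_le_turningPoint_golden]
  linear_combination (β + 1 - φ) * sq_sqrt_goldenRatio - goldenRatio_sq

theorem isPeriodicPt_Tplus_golden : IsPeriodicPt (Tplus β α) 4 p := by
  simp only [IsPeriodicPt, IsFixedPt, iterate_succ_apply', iterate_zero_apply,
    Tplus_turningPoint sqrt_goldenRatio_pos.ne', Tplus_golden_zero, Tplus_golden_alpha,
    Tplus_golden_mul_add]

theorem isPeriodicPt_Tminus_golden : IsPeriodicPt (Tminus β α) 2 ((Tminus β α)^[2] p) := by
  simp only [IsPeriodicPt, IsFixedPt, iterate_succ_apply', iterate_zero_apply,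
    Tminus_turningPoint sqrt_goldenRatio_pos.ne', Tminus_golden_one, Tminus_golden_add_sub_one,
    Tminus_golden_mul_add_sub_one]

theorem tauPlus_golden (n : ℕ) : tauPlus β α n = if n % 4 = 0 ∨ n % 4 = 3 then 1 else 0 := by
  rw [← (periodic_tauPlus isPeriodicPt_Tplus_golden).map_mod_nat]
  have hβ := sqrt_goldenRatio_pos.ne'
  have hm : n % 4 < 4 := n.mod_lt (by norm_num)
  generalize n % 4 = m at hm ⊢
  interval_cases m
  · exact tauPlus_of_ge le_rfl
  · refine tauPlus_of_lt (n := 1) ?_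
    rw [iterate_one, Tplus_turningPoint hβ]
    exact turningPoint_golden_pos
  · show tauPlus β α 2 = 0
    refine tauPlus_of_lt ?_
    rw [iterate_succ_apply', iterate_one, Tplus_turningPoint hβ, Tplus_golden_zero]
    exact alpha_golden_lt_turningPoint
  · show tauPlus β α 3 = 1
    refine tauPlus_of_ge ?_
    rw [iterate_succ_apply', iterate_succ_apply', iterate_one, Tplus_turningPoint hβ,
      Tplus_golden_zero, Tplus_golden_alpha]
    exact turningPoint_golden_le_mul_add

theorem tauMinus_golden_zero : tauMinus β α 0 = 0 := tauMinus_of_le le_rfl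

theorem tauMinus_golden_one : tauMinus β α 1 = 1 := by
  refine tauMinus_of_gt ?_
  rw [iterate_one, Tminus_turningPoint sqrt_goldenRatio_pos.ne']
  exact turningPoint_golden_lt_one

theorem tauMinus_golden_of_two_le {n : ℕ} (hn : 2 ≤ n) :
    tauMinus β α n = if n % 2 = 0 then 1 else 0 := by
  obtain ⟨m, rfl⟩ : ∃ m, n = m + 2 := ⟨n - 2, by omega⟩
  have hβ := sqrt_goldenRatio_pos.ne'
  have h2 : (Tminus β α)^[2] p = β + α - 1 := by
    rw [iterate_succ_apply', iterate_one, Tminus_turningPoint hβ, Tminus_golden_one]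
  rw [← (periodic_tauMinus_add isPeriodicPt_Tminus_golden).map_mod_nat m]
  rcases Nat.mod_two_eq_zero_or_one m with hm | hm
  · rw [hm, if_pos (by omega)]
    refine tauMinus_of_gt ?_
    rw [zero_add, h2]
    exact turningPoint_golden_lt_add_sub_one
  · rw [hm, if_neg (by omega)]
    refine tauMinus_of_le ?_
    rw [iterate_add_apply, h2, iterate_one, Tminus_golden_add_sub_one]
    exact mul_add_sub_one_le_turningPoint_golden

end GoldenMean

/-- For `β = √β₂` (square root of the golden mean) and `α = 2 - β₂`, the upper
kneading invariant is `(overline{1,0,0,1})` and the lower kneading invariant is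
`(0,1,overline{1,0})`; in particular the upper one is periodic but the lower
one is not. -/
theorem counterexample_kneading :
    let φ : ℝ := (1 + Real.sqrt 5) / 2
    let β : ℝ := Real.sqrt φ
    let α : ℝ := 2 - φ
    (∀ n, tauPlus β α n = if n % 4 = 0 ∨ n % 4 = 3 then 1 else 0) ∧
      (tauMinus β α 0 = 0 ∧ tauMinus β α 1 = 1 ∧
        ∀ n, 2 ≤ n → tauMinus β α n = if n % 2 = 0 then 1 else 0) ∧
      IsPeriodic (tauPlus β α) ∧ ¬ IsPeriodic (tauMinus β α) := by
  intro φ β α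
  refine ⟨tauPlus_golden, ⟨tauMinus_golden_zero, tauMinus_golden_one,
    fun _ => tauMinus_golden_of_two_le⟩,
    ⟨4, by norm_num, periodic_tauPlus isPeriodicPt_Tplus_golden⟩, ?_⟩
  rintro ⟨k, hk, hper⟩
  have h := Periodic.periodic_of_tail hper hk (periodic_tauMinus_add isPeriodicPt_Tminus_golden) 0
  rw [zero_add, tauMinus_golden_of_two_le le_rfl, tauMinus_golden_zero] at h
  exact absurd h (by decide)
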